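/- Let φ : ℝ × ℝ^d → ℝ be continuous with y₀ ↦ φ(y₀, y) strictly increasing for each y, let x ∈ ℝ and y ∈ ℝ^d, and suppose ξ ∈ ℝ satisfies φ(ξ, y) = x. Then the preintegration of the indicator against the standard normal density equals the normal cdf at ξ: ∫_ℝ ind(x − φ(y₀, y)) ρ(y₀) dy₀ = Φ(ξ), where ind(z) = 1 if z ≥ 0 and 0 otherwise, ρ(t) = e^{−t²/2}/√(2π), and Φ(u) = ∫_{−∞}^{u} ρ(t) dt. -/

import Mathlib

open Real Filter MeasureTheory

/-- The standard normal probability density `ρ(t) = e^{−t²/2}/√(2π)`. -/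
noncomputable def gauss (t : ℝ) : ℝ := Real.exp (-t ^ 2 / 2) / Real.sqrt (2 * Real.pi)

/-- The standard normal cumulative distribution function `Φ(u) = ∫_{−∞}^u ρ(t) dt`. -/
noncomputable def normCdf (u : ℝ) : ℝ := ∫ t in Set.Iic u, gauss t

/-- The indicator `ind(z) = 1` if `z ≥ 0` and `0` otherwise. -/
noncomputable def indf (z : ℝ) : ℝ := if 0 ≤ z then 1 else 0

theorem indf_sub_eq_indicator_Iic (a b : ℝ) : indf (a - b) = (Set.Iic a).indicator 1 b := by
  by_cases h : b ≤ a <;> simp [indf, h]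

theorem integral_indf_sub_mul_of_strictMono {α : Type*} [LinearOrder α] [TopologicalSpace α]
    [ClosedIicTopology α] [MeasurableSpace α] [OpensMeasurableSpace α] {f : α → ℝ}
    (hf : StrictMono f) (g : α → ℝ) (ξ : α) (μ : Measure α) :
    ∫ t, indf (f ξ - f t) * g t ∂μ = ∫ t in Set.Iic ξ, g t ∂μ := by
  have hind : ∀ t, indf (f ξ - f t) * g t = (Set.Iic ξ).indicator g t := by
    intro t
    by_cases ht : t ≤ ξ <;> simp [indf_sub_eq_indicator_Iic, hf.le_iff_le, ht]
  simp_rw [hind]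
  exact integral_indicator measurableSet_Iic

theorem stmt12_general (d : ℕ) (φ : ℝ → (Fin d → ℝ) → ℝ)
    (hmono : ∀ y : Fin d → ℝ, StrictMono fun t : ℝ => φ t y)
    (x : ℝ) (y : Fin d → ℝ) (ξ : ℝ) (hξ : φ ξ y = x) :
    ∫ t : ℝ, indf (x - φ t y) * gauss t = normCdf ξ := by
  subst hξ
  exact integral_indf_sub_mul_of_strictMono (hmono y) gauss ξ volume

/-- if `φ` is continuous, strictly increasing in its first variable, and
`φ(ξ,y) = x`, then `∫_ℝ ind(x − φ(y₀,y)) ρ(y₀) dy₀ = Φ(ξ)`. -/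
theorem stmt12 (d : ℕ) (φ : ℝ → (Fin d → ℝ) → ℝ)
    (hcont : Continuous fun p : ℝ × (Fin d → ℝ) => φ p.1 p.2)
    (hmono : ∀ y : Fin d → ℝ, StrictMono fun t : ℝ => φ t y)
    (x : ℝ) (y : Fin d → ℝ) (ξ : ℝ) (hξ : φ ξ y = x) :
    ∫ t : ℝ, indf (x - φ t y) * gauss t = normCdf ξ :=
  stmt12_general d φ hmono x y ξ hξ
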